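/- arXiv:2202.05625 — 5 statements merged into one kernel-verified Lean document; each statement's English description precedes it below -/
import Mathlib

section
/- Let G be a connected simple graph on Fin 12 and k_s > 0. For all u, v : Fin 12 → ℝ³ with u 0 = 0, v 0 = 0 and u ≠ v, the strict convexity inequality J_s(v) > J_s(u) + (k_s/2) · Σ over ordered pairs (i,j) with i adjacent to j in G of ⟨u i − u j, (v i − v j) − (u i − u j)⟩ holds; that is, J_s(v) exceeds J_s(u) plus the Fréchet derivative of J_s at u applied to v − u. -/
/-!
Writing `v = u + w`, the expansion `‖a + b‖² = ‖a‖² + 2⟪a, b⟫ + ‖b‖²` on every edge shows that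
`J_s(v) - J_s(u) - J_s'(u)(v - u) = J_s(w)`. The energy `J_s(w)` vanishes only if `w` is constant
on edges, hence constant on the connected graph; as `w 0 = 0`, this forces `w = 0`, i.e. `u = v`.
-/

open scoped BigOperators RealInnerProductSpace

namespace SimpleGraph

variable {V : Type*} {G : SimpleGraph V}

theorem Reachable.eq_of_forall_adj {α : Type*} {f : V → α}
    (hf : ∀ i j, G.Adj i j → f i = f j) {x y : V} (h : G.Reachable x y) : f x = f y := by
  obtain ⟨p⟩ := h
  induction p with
  | nil => rfl
  | cons hadj _ ih => exact (hf _ _ hadj).trans ih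

section DirichletEnergy

variable [Fintype V] [DecidableRel G.Adj]
  {E : Type*} [NormedAddCommGroup E]

variable (G) in
/-- Each edge is counted twice, once per orientation. -/
noncomputable def dirichletEnergy (u : V → E) : ℝ :=
  ∑ i, ∑ j, if G.Adj i j then ‖u i - u j‖ ^ 2 else 0

theorem dirichletEnergy_nonneg (u : V → E) : 0 ≤ G.dirichletEnergy u :=
  Finset.sum_nonneg fun _ _ ↦ Finset.sum_nonneg fun _ _ ↦ by split_ifs <;> positivity

theorem dirichletEnergy_eq_zero_iff {u : V → E} :
    G.dirichletEnergy u = 0 ↔ ∀ i j, G.Adj i j → u i = u j := by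
  have hterm : ∀ i j, 0 ≤ if G.Adj i j then ‖u i - u j‖ ^ 2 else 0 := fun _ _ ↦ by
    split_ifs <;> positivity
  simp only [dirichletEnergy, Finset.sum_eq_zero_iff_of_nonneg (fun i _ ↦ Finset.sum_nonneg
    fun j _ ↦ hterm i j), Finset.sum_eq_zero_iff_of_nonneg (fun j _ ↦ hterm _ j),
    Finset.mem_univ, true_implies, ite_eq_right_iff, pow_eq_zero_iff two_ne_zero,
    norm_eq_zero, sub_eq_zero]

theorem Connected.dirichletEnergy_pos (hG : G.Connected) {u : V → E} {x y : V}
    (hxy : u x ≠ u y) : 0 < G.dirichletEnergy u :=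
  (dirichletEnergy_nonneg u).lt_of_ne' fun h ↦
    hxy <| (hG x y).eq_of_forall_adj (dirichletEnergy_eq_zero_iff.mp h)

theorem dirichletEnergy_eq_add_sub [InnerProductSpace ℝ E] (u v : V → E) :
    G.dirichletEnergy v = G.dirichletEnergy u +
      2 * (∑ i, ∑ j, if G.Adj i j then ⟪u i - u j, (v i - v j) - (u i - u j)⟫ else 0) +
      G.dirichletEnergy (v - u) := by
  simp only [dirichletEnergy, Finset.mul_sum, ← Finset.sum_add_distrib]
  refine Finset.sum_congr rfl fun i _ ↦ Finset.sum_congr rfl fun j _ ↦ ?_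
  split_ifs
  · rw [Pi.sub_apply, Pi.sub_apply, sub_sub_sub_comm (v i) (u i), ← norm_add_sq_real,
      add_sub_cancel]
  · simp

end DirichletEnergy

end SimpleGraph

/-- Strict convexity inequality for the stretching energy:
for a connected graph `G` on `Fin 12`, `k_s > 0`, and `u ≠ v` with
`u 0 = 0`, `v 0 = 0`, one has
`J_s(v) > J_s(u) + J_s'(u)(v − u)`. -/
theorem stretching_energy_strictly_convex (G : SimpleGraph (Fin 12))
    [DecidableRel G.Adj] (hG : G.Connected) (ks : ℝ) (hks : 0 < ks)
    (u v : Fin 12 → EuclideanSpace ℝ (Fin 3))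
    (hu0 : u 0 = 0) (hv0 : v 0 = 0) (huv : u ≠ v) :
    (ks / 4) * ∑ i : Fin 12, ∑ j : Fin 12,
        (if G.Adj i j then ‖v i - v j‖ ^ 2 else 0) >
      (ks / 4) * (∑ i : Fin 12, ∑ j : Fin 12,
        if G.Adj i j then ‖u i - u j‖ ^ 2 else 0) +
      (ks / 2) * ∑ i : Fin 12, ∑ j : Fin 12,
        (if G.Adj i j then ⟪u i - u j, (v i - v j) - (u i - u j)⟫ else 0) := by
  obtain ⟨i, hi⟩ : ∃ i, (v - u) i ≠ (v - u) 0 := by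
    by_contra! h
    exact huv <| funext fun i ↦ (sub_eq_zero.mp <| by simpa [hu0, hv0] using h i).symm
  have hpos := hG.dirichletEnergy_pos hi
  have hexpand := G.dirichletEnergy_eq_add_sub u v
  change _ * G.dirichletEnergy v > _ * G.dirichletEnergy u + _
  nlinarith
end

section
/- Let T > 0, let g : [0,T] → ℝ be integrable, and let f : [0,T] → ℝ satisfy f(t) = f(0) + ∫₀ᵗ g(s) ds for all t ∈ [0,T]. Then for every t ∈ [0,T], ∫₀ᵗ (−(f(s))⁻) · g(s) ds = (1/2)((f(t))⁻)² − (1/2)((f(0))⁻)². -/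
open MeasureTheory intervalIntegral

lemma min_zero_lip (a b : ℝ) : |min a 0 - min b 0| ≤ |a - b| := by
  have h1 := le_abs_self (a - b)
  have h2 := neg_abs_le (a - b)
  rw [abs_sub_le_iff]
  constructor <;> simp only [min_def] <;> split_ifs <;> linarith

lemma hasDerivAt_phi (x : ℝ) :
    HasDerivAt (fun y : ℝ => (1/2) * (min y 0)^2) (min x 0) x := by
  have : HasDerivAt (fun y : ℝ => (min y 0)^2) (2 * min x 0) x := by
    rcases lt_trichotomy x 0 with hx | hx | hx
    · have h : HasDerivAt (fun y : ℝ => y^2) (2 * x^1) x := hasDerivAt_pow 2 x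
      have he : (fun y : ℝ => (min y 0)^2) =ᶠ[nhds x] fun y => y^2 := by
        filter_upwards [Iio_mem_nhds hx] with y hy
        rw [min_eq_left (le_of_lt hy)]
      simpa [min_eq_left hx.le] using h.congr_of_eventuallyEq he
    · subst hx
      rw [hasDerivAt_iff_isLittleO]
      simp only [min_self, ne_eq, OfNat.ofNat_ne_zero, not_false_eq_true, zero_pow, mul_zero,
        sub_zero, smul_zero]
      rw [Asymptotics.isLittleO_iff]
      intro c hc
      filter_upwards [Metric.ball_mem_nhds (0:ℝ) hc] with y hy
      simp only [Real.norm_eq_abs, Metric.mem_ball, Real.dist_eq, sub_zero] at hy ⊢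
      have : |(min y 0)^2| ≤ |y| * |y| := by
        rw [abs_pow, sq]
        have : |min y 0| ≤ |y| := by simpa using min_zero_lip y 0
        exact mul_le_mul this this (abs_nonneg _) (abs_nonneg _)
      calc |(min y 0)^2| ≤ |y| * |y| := this
        _ ≤ c * |y| := by nlinarith [abs_nonneg y]
    · have h : HasDerivAt (fun _ : ℝ => (0:ℝ)^2) 0 x := hasDerivAt_const x _
      have he : (fun y : ℝ => (min y 0)^2) =ᶠ[nhds x] fun _ => (0:ℝ)^2 := by
        filter_upwards [Ioi_mem_nhds hx] with y hy
        rw [min_eq_right (le_of_lt hy)]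
      simpa [min_eq_right hx.le] using h.congr_of_eventuallyEq he
  have h2 := this.const_mul (1/2 : ℝ)
  exact h2.congr_deriv (by ring)

lemma cont_chain (h : ℝ → ℝ) (hc : Continuous h) (c t : ℝ) :
    ∫ s in (0:ℝ)..t, (min (c + ∫ x in (0:ℝ)..s, h x) 0) * h s
      = (1/2) * (min (c + ∫ x in (0:ℝ)..t, h x) 0)^2 - (1/2) * (min c 0)^2 := by
  set u : ℝ → ℝ := fun s => c + ∫ x in (0:ℝ)..s, h x with hu_def
  have hu : ∀ s, HasDerivAt u (h s) s := by
    intro s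
    exact (integral_hasDerivAt_right (hc.intervalIntegrable _ _)
      hc.aestronglyMeasurable.stronglyMeasurableAtFilter hc.continuousAt).const_add c
  have hucont : Continuous u := continuous_iff_continuousAt.2 fun s => (hu s).continuousAt
  have hF : ∀ s, HasDerivAt (fun s => (1/2) * (min (u s) 0)^2) (min (u s) 0 * h s) s :=
    fun s => (hasDerivAt_phi (u s)).comp s (hu s)
  have hint : IntervalIntegrable (fun s => (min (u s) 0) * h s) volume 0 t :=
    (((hucont.min continuous_const).mul hc)).intervalIntegrable _ _
  have := integral_eq_sub_of_hasDerivAt (f := fun s => (1/2) * (min (u s) 0)^2)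
    (fun s _ => hF s) hint
  rw [this]
  simp [hu_def]

lemma prim_bound (F : ℝ → ℝ) (hF : Integrable F) (s : ℝ) (hs : 0 ≤ s) :
    |∫ x in (0:ℝ)..s, F x| ≤ ∫ x, |F x| := by
  rw [intervalIntegral.integral_of_le hs]
  calc |∫ x in Set.Ioc (0:ℝ) s, F x| ≤ ∫ x in Set.Ioc (0:ℝ) s, |F x| := by
        simpa [Real.norm_eq_abs] using
          norm_integral_le_integral_norm (μ := volume.restrict (Set.Ioc (0:ℝ) s)) F
    _ ≤ ∫ x, |F x| := by
        refine setIntegral_le_integral (by simpa [Real.norm_eq_abs] using hF.norm) ?_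
        exact Filter.Eventually.of_forall fun x => abs_nonneg _

lemma key_chain (G : ℝ → ℝ) (hG : Integrable G) (c t : ℝ) (ht : 0 ≤ t) :
    ∫ s in (0:ℝ)..t, (min (c + ∫ x in (0:ℝ)..s, G x) 0) * G s
      = (1/2) * (min (c + ∫ x in (0:ℝ)..t, G x) 0)^2 - (1/2) * (min c 0)^2 := by
  set v : ℝ → ℝ := fun s => c + ∫ x in (0:ℝ)..s, G x with hv_def
  have hvcont : Continuous v := continuous_const.add (hG.continuous_primitive 0)
  have habsG : Integrable (fun x => |G x|) volume := by
    simpa [Real.norm_eq_abs] using hG.norm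
  set I : ℝ := ∫ x, |G x| with hI_def
  have hI : 0 ≤ I := integral_nonneg fun x => abs_nonneg _
  set M : ℝ := |c| + I + 1 with hM_def
  have hM1 : 1 ≤ M := by rw [hM_def]; nlinarith [abs_nonneg c]
  have hM0 : 0 ≤ M := le_trans zero_le_one hM1
  set D : ℝ := (∫ s in (0:ℝ)..t, (min (v s) 0) * G s)
      - ((1/2) * (min (v t) 0)^2 - (1/2) * (min c 0)^2) with hD_def
  suffices hsuff : ∀ δ : ℝ, 0 < δ → |D| ≤ δ by
    have h0 : |D| ≤ 0 := by
      by_contra hcon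
      push_neg at hcon
      exact absurd (hsuff (|D|/2) (by linarith)) (by push_neg; linarith)
    have : D = 0 := abs_eq_zero.1 (le_antisymm h0 (abs_nonneg _))
    rw [hD_def] at this
    linarith
  intro δ hδ
  set ε : ℝ := min 1 (δ / (I + 2*M + 1)) with hε_def
  have hεpos : 0 < ε := lt_min one_pos (by positivity)
  have hε1 : ε ≤ 1 := min_le_left _ _
  have hεδ : ε * (I + 2*M) ≤ δ := by
    calc ε * (I + 2*M) ≤ (δ / (I + 2*M + 1)) * (I + 2*M) :=
          mul_le_mul_of_nonneg_right (min_le_right _ _) (by positivity)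
      _ ≤ δ := by
          rw [div_mul_eq_mul_div, div_le_iff₀ (by positivity)]
          nlinarith
  obtain ⟨h, -, hinth, hcont, hhint⟩ := hG.exists_hasCompactSupport_integral_sub_le hεpos
  simp only [Real.norm_eq_abs] at hinth
  set u : ℝ → ℝ := fun s => c + ∫ x in (0:ℝ)..s, h x with hu_def
  have hucont : Continuous u := continuous_const.add (hhint.continuous_primitive 0)
  have hGh : Integrable (fun x => G x - h x) volume := hG.sub hhint
  have habsGh : Integrable (fun x => |G x - h x|) volume := by
    simpa [Real.norm_eq_abs] using hGh.norm
  have habsh : Integrable (fun x => |h x|) volume := by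
    simpa [Real.norm_eq_abs] using hhint.norm
  -- distance between primitives
  have hdiff : ∀ s, 0 ≤ s → |v s - u s| ≤ ε := by
    intro s hs
    have : v s - u s = ∫ x in (0:ℝ)..s, (G x - h x) := by
      rw [intervalIntegral.integral_sub (hG.intervalIntegrable) (hhint.intervalIntegrable)]
      simp [hv_def, hu_def]
    rw [this]
    exact le_trans (prim_bound _ hGh s hs) hinth
  -- bounds
  have hIh : ∫ x, |h x| ≤ I + ε := by
    have hmono : ∫ x, |h x| ≤ ∫ x, (|G x - h x| + |G x|) := by
      refine integral_mono habsh (habsGh.add habsG) ?_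
      intro x
      have t1 := abs_sub_abs_le_abs_sub (h x) (G x)
      have t2 : |h x - G x| = |G x - h x| := abs_sub_comm _ _
      simp only
      linarith
    rw [MeasureTheory.integral_add habsGh habsG] at hmono
    linarith
  have hub : ∀ s, 0 ≤ s → |u s| ≤ M := by
    intro s hs
    calc |u s| ≤ |c| + |∫ x in (0:ℝ)..s, h x| := abs_add_le _ _
      _ ≤ |c| + (I + ε) := by linarith [le_trans (prim_bound h hhint s hs) hIh]
      _ ≤ M := by rw [hM_def]; linarith
  have hvb : ∀ s, 0 ≤ s → |v s| ≤ M := by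
    intro s hs
    calc |v s| ≤ |c| + |∫ x in (0:ℝ)..s, G x| := abs_add_le _ _
      _ ≤ |c| + I := by linarith [prim_bound G hG s hs]
      _ ≤ M := by rw [hM_def]; linarith
  -- integrability of the two integrands
  have hintA : IntervalIntegrable (fun s => (min (v s) 0) * G s) volume 0 t :=
    hG.intervalIntegrable.continuousOn_mul ((hvcont.min continuous_const).continuousOn)
  have hintB : IntervalIntegrable (fun s => (min (u s) 0) * h s) volume 0 t :=
    hhint.intervalIntegrable.continuousOn_mul ((hucont.min continuous_const).continuousOn)
  -- chain rule for the continuous approximation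
  have hcc : ∫ s in (0:ℝ)..t, (min (u s) 0) * h s
      = (1/2) * (min (u t) 0)^2 - (1/2) * (min c 0)^2 := cont_chain h hcont c t
  -- main integral estimate
  have hbound_int : Integrable (fun s => ε * |G s| + M * |G s - h s|)
      (volume.restrict (Set.Ioc (0:ℝ) t)) :=
    ((habsG.const_mul ε).integrableOn).add ((habsGh.const_mul M).integrableOn)
  have hAB : |(∫ s in (0:ℝ)..t, (min (v s) 0) * G s)
      - (∫ s in (0:ℝ)..t, (min (u s) 0) * h s)| ≤ ε * I + M * ε := by
    rw [← intervalIntegral.integral_sub hintA hintB, intervalIntegral.integral_of_le ht]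
    have hptwise : ∀ᵐ s ∂(volume.restrict (Set.Ioc (0:ℝ) t)),
        ‖(min (v s) 0) * G s - (min (u s) 0) * h s‖ ≤ ε * |G s| + M * |G s - h s| := by
      filter_upwards [ae_restrict_mem measurableSet_Ioc] with s hs
      have hs0 : (0:ℝ) ≤ s := hs.1.le
      have h1 : |min (v s) 0 - min (u s) 0| ≤ ε := le_trans (min_zero_lip _ _) (hdiff s hs0)
      have h2 : |min (u s) 0| ≤ M := le_trans (by simpa using min_zero_lip (u s) 0) (hub s hs0)
      calc ‖(min (v s) 0) * G s - (min (u s) 0) * h s‖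
          = |(min (v s) 0 - min (u s) 0) * G s + (min (u s) 0) * (G s - h s)| := by
            rw [Real.norm_eq_abs]; ring_nf
        _ ≤ |(min (v s) 0 - min (u s) 0) * G s| + |(min (u s) 0) * (G s - h s)| := abs_add_le _ _
        _ = |min (v s) 0 - min (u s) 0| * |G s| + |min (u s) 0| * |G s - h s| := by
            rw [abs_mul, abs_mul]
        _ ≤ ε * |G s| + M * |G s - h s| :=
            add_le_add (mul_le_mul_of_nonneg_right h1 (abs_nonneg _))
              (mul_le_mul_of_nonneg_right h2 (abs_nonneg _))
    have e1 : ∫ s in Set.Ioc (0:ℝ) t, |G s| ≤ I :=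
      setIntegral_le_integral habsG (Filter.Eventually.of_forall fun x => abs_nonneg _)
    have e2 : ∫ s in Set.Ioc (0:ℝ) t, |G s - h s| ≤ ε :=
      le_trans (setIntegral_le_integral habsGh
        (Filter.Eventually.of_forall fun x => abs_nonneg _)) hinth
    calc ‖∫ s in Set.Ioc (0:ℝ) t, ((min (v s) 0) * G s - (min (u s) 0) * h s)‖
        ≤ ∫ s in Set.Ioc (0:ℝ) t, (ε * |G s| + M * |G s - h s|) :=
          norm_integral_le_of_norm_le hbound_int hptwise
      _ = ε * (∫ s in Set.Ioc (0:ℝ) t, |G s|) + M * (∫ s in Set.Ioc (0:ℝ) t, |G s - h s|) := by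
          rw [MeasureTheory.integral_add ((habsG.const_mul ε).integrableOn)
            ((habsGh.const_mul M).integrableOn), MeasureTheory.integral_const_mul, MeasureTheory.integral_const_mul]
      _ ≤ ε * I + M * ε :=
          add_le_add (mul_le_mul_of_nonneg_left e1 hεpos.le)
            (mul_le_mul_of_nonneg_left e2 hM0)
  -- the phi-difference estimate
  have hphi : |(1/2) * (min (u t) 0)^2 - (1/2) * (min (v t) 0)^2| ≤ M * ε := by
    have h1 : |min (u t) 0 - min (v t) 0| ≤ ε := by
      refine le_trans (min_zero_lip _ _) ?_
      rw [abs_sub_comm]; exact hdiff t ht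
    have h2 : |min (u t) 0| ≤ M := le_trans (by simpa using min_zero_lip (u t) 0) (hub t ht)
    have h3 : |min (v t) 0| ≤ M := le_trans (by simpa using min_zero_lip (v t) 0) (hvb t ht)
    have heq : (1/2) * (min (u t) 0)^2 - (1/2) * (min (v t) 0)^2
        = (1/2) * ((min (u t) 0 - min (v t) 0) * (min (u t) 0 + min (v t) 0)) := by ring
    rw [heq, abs_mul, abs_mul]
    have h4 : |min (u t) 0 + min (v t) 0| ≤ 2 * M := le_trans (abs_add_le _ _) (by linarith)
    have h5 : (0:ℝ) ≤ |min (u t) 0 - min (v t) 0| := abs_nonneg _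
    rw [abs_of_nonneg (by norm_num : (0:ℝ) ≤ 1/2)]
    nlinarith [abs_nonneg (min (u t) 0 + min (v t) 0), hεpos.le]
  -- conclude
  have hDeq : D = ((∫ s in (0:ℝ)..t, (min (v s) 0) * G s)
      - (∫ s in (0:ℝ)..t, (min (u s) 0) * h s))
      + ((1/2) * (min (u t) 0)^2 - (1/2) * (min (v t) 0)^2) := by
    rw [hD_def, hcc]; ring
  rw [hDeq]
  refine le_trans (abs_add_le _ _) ?_
  calc |(∫ s in (0:ℝ)..t, (min (v s) 0) * G s)
        - (∫ s in (0:ℝ)..t, (min (u s) 0) * h s)|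
      + |(1/2) * (min (u t) 0)^2 - (1/2) * (min (v t) 0)^2|
      ≤ (ε * I + M * ε) + M * ε := add_le_add hAB hphi
    _ = ε * (I + 2*M) := by ring
    _ ≤ δ := hεδ

/-- Stampacchia-type chain rule: if `f(t) = f(0) + ∫₀ᵗ g(s) ds`
on `[0,T]` with `g` integrable, then for every `t ∈ [0,T]`,
`∫₀ᵗ (−f(s)⁻)·g(s) ds = (1/2)(f(t)⁻)² − (1/2)(f(0)⁻)²`.
Here `x⁻ = max (−x) 0` is the negative part. -/
theorem negPart_sq_chain_rule (T : ℝ) (hT : 0 < T) (f g : ℝ → ℝ)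
    (hg : IntegrableOn g (Set.Icc 0 T))
    (hf : ∀ t ∈ Set.Icc (0 : ℝ) T, f t = f 0 + ∫ s in (0 : ℝ)..t, g s) :
    ∀ t ∈ Set.Icc (0 : ℝ) T,
      ∫ s in (0 : ℝ)..t, (-(max (-(f s)) 0)) * g s =
        (1 / 2) * (max (-(f t)) 0) ^ 2 - (1 / 2) * (max (-(f 0)) 0) ^ 2 := by

  intro t ht
  obtain ⟨ht0, htT⟩ := ht
  set G : ℝ → ℝ := (Set.Icc (0:ℝ) T).indicator g with hG_def
  have hGint : Integrable G volume := by
    rw [hG_def]; exact hg.integrable_indicator measurableSet_Icc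
  have hGg : ∀ s ∈ Set.Icc (0:ℝ) T, (∫ x in (0:ℝ)..s, g x) = ∫ x in (0:ℝ)..s, G x := by
    intro s hs
    apply intervalIntegral.integral_congr
    intro x hx
    rw [Set.uIcc_of_le hs.1] at hx
    have hxT : x ∈ Set.Icc (0:ℝ) T := ⟨hx.1, le_trans hx.2 hs.2⟩
    rw [hG_def, Set.indicator_of_mem hxT]
  have hfv : ∀ s ∈ Set.Icc (0:ℝ) T, f s = f 0 + ∫ x in (0:ℝ)..s, G x := by
    intro s hs; rw [hf s hs, hGg s hs]
  have hmax : ∀ x : ℝ, max (-x) 0 = - min x 0 := by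
    intro x
    rcases le_total x 0 with h | h
    · rw [min_eq_left h, max_eq_left (by linarith)]
    · rw [min_eq_right h, max_eq_right (by linarith), neg_zero]
  simp only [hmax, neg_neg, neg_sq]
  have hcongr : (∫ s in (0:ℝ)..t, (min (f s) 0) * g s)
      = ∫ s in (0:ℝ)..t, (min (f 0 + ∫ x in (0:ℝ)..s, G x) 0) * G s := by
    apply intervalIntegral.integral_congr
    intro s hs
    rw [Set.uIcc_of_le ht0] at hs
    have hsT : s ∈ Set.Icc (0:ℝ) T := ⟨hs.1, le_trans hs.2 htT⟩
    show (min (f s) 0) * g s = (min (f 0 + ∫ x in (0:ℝ)..s, G x) 0) * G s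
    rw [← hfv s hsT]
    congr 1
    rw [hG_def, Set.indicator_of_mem hsT]
  rw [hcongr, hfv t ⟨ht0, htT⟩]
  exact key_chain G hGint (f 0) t ht0
end

section
/- Let E denote the inner product space of functions Fin 11 → ℝ³, let Υ : E → E be a symmetric linear map, let κ > 0, let p : Fin 11 → ℝ³ have heights a i := ⟨p i, e₃⟩ ≥ 0, let F : ℝ → E be continuous, and let U : ℝ → E be twice differentiable with U''(t) + Υ(U(t)) + κ⁻¹ N_pt(U(t)) = F(t) for all t ∈ [0,T]. Then the energy 𝓔(t) := (1/2)‖U'(t)‖² + (1/2)⟨Υ(U(t)), U(t)⟩ + (2κ)⁻¹ Σ_i ((a i + ⟨U(t) i, e₃⟩)⁻)² is differentiable on [0,T] with 𝓔'(t) = ⟨F(t), U'(t)⟩. -/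
open MeasureTheory
open scoped RealInnerProductSpace BigOperators

/-! Along any trajectory, `d/dt (½‖U'‖²) = ⟪U'', U'⟫` and, by the symmetry of `Υ`,
`d/dt (½⟪ΥU, U⟫) = ⟪ΥU, U'⟫`. The penalty energy is a potential for the penalty force:
since `d/dx (x⁻)² = -2 x⁻`, the gradient of `u ↦ (2κ)⁻¹ Σᵢ ((aᵢ + ⟨uᵢ, e₃⟩)⁻)²` is
`κ⁻¹ N_pt(u)`. Summing the three derivatives and using the equation of motion gives
`⟪U'' + ΥU + κ⁻¹ N_pt(U), U'⟫ = ⟪F, U'⟫`. -/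

/-- The third standard basis vector `e₃ = (0,0,1)` of `ℝ³`. -/
noncomputable def e3 : EuclideanSpace ℝ (Fin 3) := EuclideanSpace.single 2 1

/-- The finite-dimensional inner product space `E` of displacement arrays
`Fin 11 → ℝ³`, endowed with the Euclidean (ℓ²) inner product. -/
abbrev E : Type := PiLp 2 (fun _ : Fin 11 => EuclideanSpace ℝ (Fin 3))

/-- The pointwise penalty map: `(N_pt u) i = −((a i + ⟨u i, e₃⟩)⁻) • e₃`,
where `a i = ⟨p i, e₃⟩` and `x⁻ = max (−x) 0`. -/
noncomputable def Npt (p : Fin 11 → EuclideanSpace ℝ (Fin 3)) (u : E) : E :=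
  WithLp.toLp 2 (fun i => (-(max (-(⟪p i, e3⟫ + ⟪u i, e3⟫)) 0)) • e3)

theorem hasDerivAt_max_neg_zero_sq (x : ℝ) :
    HasDerivAt (fun y : ℝ => max (-y) 0 ^ 2) (-2 * max (-x) 0) x := by
  refine hasDerivAt_of_hasDerivAt_of_ne' (x := 0) (f := fun y : ℝ => max (-y) 0 ^ 2)
    (g := fun y => -2 * max (-y) 0) (fun y hy => ?_) (by fun_prop) (by fun_prop) x
  rcases hy.lt_or_gt with hy | hy
  · have hsq : HasDerivAt (fun z : ℝ => (-z) ^ 2) (-2 * -y) y :=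
      ((hasDerivAt_neg' y).fun_pow 2).congr_deriv (by norm_num)
    rw [max_eq_left (by linarith)]
    refine hsq.congr_of_eventuallyEq ?_
    filter_upwards [Iio_mem_nhds hy] with z (hz : z < 0)
    rw [max_eq_left (by linarith)]
  · rw [max_eq_right (by linarith), mul_zero]
    refine (hasDerivAt_const y (0 : ℝ)).congr_of_eventuallyEq ?_
    filter_upwards [Ioi_mem_nhds hy] with z (hz : 0 < z)
    rw [max_eq_right (by linarith), sq, mul_zero]

section EnergyIdentity

variable {H : Type*} [NormedAddCommGroup H] [InnerProductSpace ℝ H] [CompleteSpace H]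
  {Υ : H →ₗ[ℝ] H} {U : ℝ → H} {v : H} {t : ℝ}

theorem LinearMap.IsSymmetric.hasDerivAt_inner_map_self (hΥ : Υ.IsSymmetric)
    (hU : HasDerivAt U v t) :
    HasDerivAt (fun s => ⟪Υ (U s), U s⟫) (2 * ⟪Υ (U t), v⟫) t := by
  have hΥU : HasDerivAt (fun s => Υ (U s)) (Υ v) t :=
    (ContinuousLinearMap.mk Υ hΥ.continuous).hasFDerivAt.comp_hasDerivAt t hU
  refine (hΥU.inner ℝ hU).congr_deriv ?_
  rw [hΥ, real_inner_comm (Υ v)]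
  ring

theorem LinearMap.IsSymmetric.hasDerivAt_energy (hΥ : Υ.IsSymmetric)
    {V : H → ℝ} {G F : H} {U' U'' : ℝ → H}
    (hU : HasDerivAt U (U' t) t) (hU' : HasDerivAt U' (U'' t) t)
    (hV : HasGradientAt V G (U t)) (heq : U'' t + Υ (U t) + G = F) :
    HasDerivAt (fun s => (1 / 2) * ‖U' s‖ ^ 2 + (1 / 2) * ⟪Υ (U s), U s⟫ + V (U s))
      ⟪F, U' t⟫ t := by
  have hkin := hU'.norm_sq.const_mul (1 / 2 : ℝ)
  have hel := (hΥ.hasDerivAt_inner_map_self hU).const_mul (1 / 2 : ℝ)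
  have hpot := hV.hasFDerivAt.comp_hasDerivAt t hU
  refine ((hkin.add hel).add hpot).congr_deriv ?_
  rw [← heq, inner_add_left, inner_add_left, real_inner_comm (U' t)]
  simp [real_inner_comm]

end EnergyIdentity

noncomputable def penaltyPotential (κ : ℝ) (p : Fin 11 → EuclideanSpace ℝ (Fin 3)) (u : E) : ℝ :=
  (2 * κ)⁻¹ * ∑ i : Fin 11, max (-(⟪p i, e3⟫ + ⟪u i, e3⟫)) 0 ^ 2

theorem hasGradientAt_penaltyPotential (κ : ℝ) (p : Fin 11 → EuclideanSpace ℝ (Fin 3)) (u : E) :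
    HasGradientAt (penaltyPotential κ p) (κ⁻¹ • Npt p u) u := by
  have hterm (i : Fin 11) := (hasDerivAt_max_neg_zero_sq (⟪p i, e3⟫ + ⟪u i, e3⟫)).comp_hasFDerivAt u
    ((((PiLp.proj 2 (fun _ : Fin 11 => EuclideanSpace ℝ (Fin 3)) i).hasFDerivAt.inner ℝ
      (hasFDerivAt_const e3 u))).const_add ⟪p i, e3⟫)
  have := (HasFDerivAt.fun_sum (u := Finset.univ) fun i _ => hterm i).const_mul (2 * κ)⁻¹
  rw [hasGradientAt_iff_hasFDerivAt]
  refine this.congr_fderiv ?_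
  ext w
  simp only [smul_apply, FunLike.coe_sum, Finset.sum_apply,
    ContinuousLinearMap.coe_comp, Function.comp_apply, ContinuousLinearMap.prod_apply,
    fderivInnerCLM_apply, PiLp.proj_apply, zero_apply, inner_zero_right,
    zero_add, InnerProductSpace.toDual_apply_apply, real_inner_smul_left, smul_eq_mul]
  rw [PiLp.inner_apply, Finset.mul_sum, Finset.mul_sum]
  refine Finset.sum_congr rfl fun i _ => ?_
  rw [Npt, PiLp.toLp_apply, real_inner_smul_left, real_inner_comm (w i) e3]
  ring

set_option synthInstance.maxHeartbeats 0 in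
set_option maxHeartbeats 0 in
theorem penalized_energy_identity_general (T : ℝ)
    (Υ : E →ₗ[ℝ] E) (hsym : ∀ x y : E, ⟪Υ x, y⟫ = ⟪x, Υ y⟫)
    (κ : ℝ)
    (p : Fin 11 → EuclideanSpace ℝ (Fin 3))
    (F : ℝ → E)
    (U U' U'' : ℝ → E)
    (hU : ∀ t : ℝ, HasDerivAt U (U' t) t)
    (hU' : ∀ t : ℝ, HasDerivAt U' (U'' t) t)
    (heq : ∀ t ∈ Set.Icc (0 : ℝ) T,
      U'' t + Υ (U t) + κ⁻¹ • Npt p (U t) = F t) :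
    ∀ t ∈ Set.Icc (0 : ℝ) T,
      HasDerivWithinAt
        (fun s => (1 / 2) * ‖U' s‖ ^ 2 + (1 / 2) * ⟪Υ (U s), U s⟫ +
          (2 * κ)⁻¹ * ∑ i : Fin 11,
            (max (-(⟪p i, e3⟫ + ⟪U s i, e3⟫)) 0) ^ 2)
        (⟪F t, U' t⟫) (Set.Icc 0 T) t := by
  intro t ht
  have hΥ : Υ.IsSymmetric := hsym
  have hpot := hasGradientAt_penaltyPotential κ p (U t)
  exact (hΥ.hasDerivAt_energy (hU t) (hU' t) hpot (heq t ht)).hasDerivWithinAt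

set_option synthInstance.maxHeartbeats 0 in
set_option maxHeartbeats 0 in
/-- energy identity for the penalized equation
`U'' + Υ U + κ⁻¹ N_pt(U) = F`: the energy
`𝓔(t) = (1/2)‖U'(t)‖² + (1/2)⟨Υ U(t), U(t)⟩ + (2κ)⁻¹ Σᵢ ((aᵢ + ⟨U(t) i, e₃⟩)⁻)²`
is differentiable on `[0,T]` with `𝓔'(t) = ⟨F(t), U'(t)⟩`. -/
theorem penalized_energy_identity (T : ℝ) (hT : 0 < T)
    (Υ : E →ₗ[ℝ] E) (hsym : ∀ x y : E, ⟪Υ x, y⟫ = ⟪x, Υ y⟫)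
    (κ : ℝ) (hκ : 0 < κ)
    (p : Fin 11 → EuclideanSpace ℝ (Fin 3)) (hp : ∀ i, 0 ≤ ⟪p i, e3⟫)
    (F : ℝ → E) (hF : Continuous F)
    (U U' U'' : ℝ → E)
    (hU : ∀ t : ℝ, HasDerivAt U (U' t) t)
    (hU' : ∀ t : ℝ, HasDerivAt U' (U'' t) t)
    (heq : ∀ t ∈ Set.Icc (0 : ℝ) T,
      U'' t + Υ (U t) + κ⁻¹ • Npt p (U t) = F t) :
    ∀ t ∈ Set.Icc (0 : ℝ) T,
      HasDerivWithinAt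
        (fun s => (1 / 2) * ‖U' s‖ ^ 2 + (1 / 2) * ⟪Υ (U s), U s⟫ +
          (2 * κ)⁻¹ * ∑ i : Fin 11,
            (max (-(⟪p i, e3⟫ + ⟪U s i, e3⟫)) 0) ^ 2)
        (⟪F t, U' t⟫) (Set.Icc 0 T) t :=
  penalized_energy_identity_general T Υ hsym κ p F U U' U'' hU hU' heq
end

section
/- Let E denote the inner product space of functions Fin 11 → ℝ³, let T > 0, κ > 0, let Υ : E → E be a linear map, let p : Fin 11 → ℝ³ have heights a i := ⟨p i, e₃⟩ ≥ 0, let F : [0,T] → E be integrable, and let U₀, U₁ ∈ E. Then there exists a unique continuous function U : [0,T] → E satisfying, for every t ∈ [0,T], the integral equation U(t) = U₀ + t • U₁ + ∫₀ᵗ (t − s) • (F(s) − Υ(U(s)) − κ⁻¹ N_pt(U(s))) ds. -/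
open MeasureTheory intervalIntegral
open scoped RealInnerProductSpace BigOperators

/-!
The right-hand side `F s - G (U s)` with `G u = Υ u + κ⁻¹ • N_pt u` is globally Lipschitz in `U`
(`N_pt` is `1`-Lipschitz since `x ↦ x⁻` is). Hence the Picard map `Φ` of the integral equation on
`C([0,T], E)` satisfies `‖Φⁿ u t - Φⁿ v t‖ ≤ (KT)ⁿ tⁿ / n! ‖u - v‖∞`, `K` a Lipschitz constant of
`G`, so some iterate of `Φ` is a contraction however large `T` is, and `Φ` has a unique fixed
point. Continuity of the Duhamel term for a merely integrable `F` follows from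
`∫₀ᵗ (t - s) h s ds = t ∫₀ᵗ h - ∫₀ᵗ s h s ds`.
-/

open Set Function
open scoped NNReal Nat

theorem LinearMap.lipschitzWith_of_finiteDimensional {𝕜 V W : Type*} [NontriviallyNormedField 𝕜]
    [CompleteSpace 𝕜] [NormedAddCommGroup V] [NormedSpace 𝕜 V] [FiniteDimensional 𝕜 V]
    [NormedAddCommGroup W] [NormedSpace 𝕜 W] (f : V →ₗ[𝕜] W) :
    LipschitzWith ‖LinearMap.toContinuousLinearMap f‖₊ f :=
  (LinearMap.toContinuousLinearMap f).lipschitz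

section Volterra

variable {α : Type*} [MetricSpace α] {T : ℝ}

def VolterraLipschitzWith (K : ℝ≥0) (Φ : C(Icc 0 T, α) → C(Icc 0 T, α)) : Prop :=
  ∀ (n : ℕ) (c : ℝ) (u v : C(Icc 0 T, α)), 0 ≤ c →
    (∀ x : Icc 0 T, dist (u x) (v x) ≤ c * (x : ℝ) ^ n / n !) →
    ∀ x : Icc 0 T, dist (Φ u x) (Φ v x) ≤ K * c * (x : ℝ) ^ (n + 1) / (n + 1)!

namespace VolterraLipschitzWith

variable {K : ℝ≥0} {Φ : C(Icc 0 T, α) → C(Icc 0 T, α)}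

theorem dist_iterate_apply_le (hΦ : VolterraLipschitzWith K Φ) (n : ℕ) (u v : C(Icc 0 T, α))
    (x : Icc 0 T) : dist (Φ^[n] u x) (Φ^[n] v x) ≤ K ^ n * dist u v * (x : ℝ) ^ n / n ! := by
  induction n generalizing x with
  | zero => simpa using ContinuousMap.dist_apply_le_dist x
  | succ n ih =>
    rw [iterate_succ_apply', iterate_succ_apply', pow_succ', mul_assoc (K : ℝ)]
    exact hΦ n _ _ _ (by positivity) ih x

theorem lipschitzWith_iterate (hΦ : VolterraLipschitzWith K Φ) (n : ℕ) :
    LipschitzWith (K ^ n * T ^ n / n !).toNNReal Φ^[n] := by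
  refine LipschitzWith.of_dist_le_mul fun u v =>
    (ContinuousMap.dist_le (by positivity)).2 fun x => ?_
  calc dist (Φ^[n] u x) (Φ^[n] v x) ≤ K ^ n * dist u v * (x : ℝ) ^ n / n ! :=
        hΦ.dist_iterate_apply_le n u v x
    _ ≤ K ^ n * T ^ n / n ! * dist u v := by
        rw [mul_right_comm, mul_div_right_comm]
        gcongr
        exacts [x.2.1, x.2.2]
    _ ≤ _ := by gcongr; exact Real.le_coe_toNNReal _

theorem exists_contractingWith_iterate (hΦ : VolterraLipschitzWith K Φ) :
    ∃ (n : ℕ) (c : ℝ≥0), ContractingWith c Φ^[n] := by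
  have hsmall := FloorSemiring.tendsto_pow_div_factorial_atTop ((K : ℝ) * T)
  obtain ⟨n, hn⟩ := (hsmall.eventually_lt_const one_pos).exists
  refine ⟨n, _, Real.toNNReal_lt_one.2 ?_, hΦ.lipschitzWith_iterate n⟩
  rwa [← mul_pow]

theorem existsUnique_isFixedPt [Nonempty α] [CompleteSpace α] (hΦ : VolterraLipschitzWith K Φ) :
    ∃! u, IsFixedPt Φ u := by
  have : Nonempty C(Icc 0 T, α) := ⟨.const _ (Classical.arbitrary α)⟩
  obtain ⟨n, c, hc⟩ := hΦ.exists_contractingWith_iterate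
  exact ⟨_, hc.isFixedPt_fixedPoint_iterate, fun u hu => hc.fixedPoint_unique (hu.iterate n)⟩

end VolterraLipschitzWith

end Volterra

section Duhamel

variable {X : Type*} [NormedAddCommGroup X] [NormedSpace ℝ X] {h h₁ h₂ : ℝ → X} {t T : ℝ}

noncomputable def duhamel (h : ℝ → X) (t : ℝ) : X := ∫ s in 0..t, (t - s) • h s

theorem duhamel_eq_smul_integral_sub (hh : IntervalIntegrable h volume 0 t) :
    duhamel h t = t • (∫ s in 0..t, h s) - ∫ s in 0..t, s • h s := by
  simp only [duhamel, sub_smul]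
  rw [intervalIntegral.integral_sub, intervalIntegral.integral_smul]
  exacts [hh.smul t, hh.continuousOn_smul continuousOn_id]

theorem continuousOn_duhamel (hh : IntervalIntegrable h volume 0 T) :
    ContinuousOn (duhamel h) (uIcc 0 T) := by
  have hmem : (0 : ℝ) ∈ uIcc 0 T := left_mem_uIcc
  have hprim := continuousOn_primitive_interval' hh hmem
  have hprim_smul := continuousOn_primitive_interval' (hh.continuousOn_smul continuousOn_id) hmem
  exact ((continuousOn_id.smul hprim).sub hprim_smul).congr fun t ht =>
    duhamel_eq_smul_integral_sub (hh.mono_set (uIcc_subset_uIcc hmem ht))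

theorem duhamel_sub (hh₁ : IntervalIntegrable h₁ volume 0 t)
    (hh₂ : IntervalIntegrable h₂ volume 0 t) :
    duhamel h₁ t - duhamel h₂ t = duhamel (fun s => h₁ s - h₂ s) t := by
  simp only [duhamel, smul_sub]
  exact (integral_sub (hh₁.continuousOn_smul (continuousOn_const.sub continuousOn_id))
    (hh₂.continuousOn_smul (continuousOn_const.sub continuousOn_id))).symm

theorem duhamel_congr (hh : EqOn h₁ h₂ (uIcc 0 t)) : duhamel h₁ t = duhamel h₂ t :=
  integral_congr fun s hs => by simp only [hh hs]

theorem norm_duhamel_le {C : ℝ} {n : ℕ} (ht : 0 ≤ t) (hh : ∀ s ∈ Ioc 0 t, ‖h s‖ ≤ C * s ^ n) :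
    ‖duhamel h t‖ ≤ t * C * t ^ (n + 1) / (n + 1) := by
  calc ‖duhamel h t‖ ≤ ∫ s in 0..t, t * C * s ^ n := by
        refine norm_integral_le_of_norm_le ht (ae_of_all _ fun s hs => ?_)
          ((by fun_prop : Continuous fun s : ℝ => t * C * s ^ n).intervalIntegrable _ _)
        rw [norm_smul, Real.norm_of_nonneg (sub_nonneg.2 hs.2), mul_assoc]
        exact mul_le_mul (by linarith [hs.1]) (hh s hs) (norm_nonneg _) ht
    _ = t * C * t ^ (n + 1) / (n + 1) := by
        rw [intervalIntegral.integral_const_mul, integral_pow, zero_pow n.succ_ne_zero, sub_zero,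
          mul_div_assoc]

end Duhamel

section Picard

variable {X : Type*} [NormedAddCommGroup X] {T : ℝ} {g : ℝ → X} {F : ℝ → X} {G : X → X}
  {K : ℝ≥0}

theorem intervalIntegrable_sub_comp (hF : IntegrableOn F (Icc 0 T)) (hG : Continuous G)
    {w : ℝ → X} (hw : Continuous w) {t : ℝ} (ht : t ∈ Icc 0 T) :
    IntervalIntegrable (fun s => F s - G (w s)) volume 0 t :=
  ((hF.mono_set (uIcc_subset_Icc ⟨le_rfl, ht.1.trans ht.2⟩ ht)).sub
    (hG.comp hw).integrableOn_uIcc).intervalIntegrable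

variable [NormedSpace ℝ X]

noncomputable def picardMap (hT : 0 ≤ T) (hg : ContinuousOn g (Icc 0 T))
    (hF : IntegrableOn F (Icc 0 T)) (hG : Continuous G) (u : C(Icc 0 T, X)) : C(Icc 0 T, X) :=
  ⟨(Icc 0 T).domRestrict fun t => g t + duhamel (fun s => F s - G (IccExtend hT u s)) t,
    (hg.add (by
      simpa only [uIcc_of_le hT] using continuousOn_duhamel
        (intervalIntegrable_sub_comp hF hG u.continuous.Icc_extend' ⟨hT, le_rfl⟩))).domRestrict⟩

theorem picardMap_apply (hT : 0 ≤ T) (hg : ContinuousOn g (Icc 0 T))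
    (hF : IntegrableOn F (Icc 0 T)) (hG : Continuous G) (u : C(Icc 0 T, X)) (t : Icc 0 T) :
    picardMap hT hg hF hG u t = g t + duhamel (fun s => F s - G (IccExtend hT u s)) t :=
  rfl

theorem volterraLipschitzWith_picardMap (hT : 0 ≤ T) (hg : ContinuousOn g (Icc 0 T))
    (hF : IntegrableOn F (Icc 0 T)) (hG : LipschitzWith K G) :
    VolterraLipschitzWith (K * T.toNNReal) (picardMap hT hg hF hG.continuous) := by
  rintro n c u v hc huv ⟨t, ht⟩
  have hint (w : C(Icc 0 T, X)) := intervalIntegrable_sub_comp hF hG.continuous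
    (w.continuous.Icc_extend' (h := hT)) ht
  rw [dist_eq_norm, picardMap_apply, picardMap_apply, add_sub_add_left_eq_sub,
    duhamel_sub (hint u) (hint v)]
  have hbound : ∀ s ∈ Ioc 0 t, ‖F s - G (IccExtend hT u s) - (F s - G (IccExtend hT v s))‖ ≤
      K * c / n ! * s ^ n := fun s hs => by
    have hs' : s ∈ Icc 0 T := ⟨hs.1.le, hs.2.trans ht.2⟩
    rw [sub_sub_sub_cancel_left, norm_sub_rev, ← dist_eq_norm, IccExtend_of_mem hT u hs',
      IccExtend_of_mem hT v hs']
    exact (hG.dist_le_mul_of_le (huv ⟨s, hs'⟩)).trans_eq (by ring)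
  calc _ ≤ t * (K * c / n !) * t ^ (n + 1) / (n + 1) := norm_duhamel_le ht.1 hbound
    _ ≤ T * (K * c / n !) * t ^ (n + 1) / (n + 1) := by have := ht.1; gcongr; exact ht.2
    _ = _ := by
        rw [NNReal.coe_mul, Real.coe_toNNReal _ hT, Nat.factorial_succ]
        push_cast
        field_simp

def IsDuhamelSolution (T : ℝ) (g F : ℝ → X) (G : X → X) (U : ℝ → X) : Prop :=
  ContinuousOn U (Icc 0 T) ∧ ∀ t ∈ Icc 0 T, U t = g t + duhamel (fun s => F s - G (U s)) t

theorem IsDuhamelSolution.congr {U V : ℝ → X} (hU : IsDuhamelSolution T g F G U)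
    (hUV : EqOn U V (Icc 0 T)) : IsDuhamelSolution T g F G V := by
  refine ⟨hU.1.congr hUV.symm, fun t ht => ?_⟩
  rw [← hUV ht, hU.2 t ht]
  congr 1
  exact duhamel_congr fun s hs => by
    rw [hUV (uIcc_subset_Icc ⟨le_rfl, ht.1.trans ht.2⟩ ht hs)]

theorem isFixedPt_picardMap_iff (hT : 0 ≤ T) (hg : ContinuousOn g (Icc 0 T))
    (hF : IntegrableOn F (Icc 0 T)) (hG : Continuous G) (u : C(Icc 0 T, X)) :
    IsFixedPt (picardMap hT hg hF hG) u ↔ IsDuhamelSolution T g F G (IccExtend hT u) := by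
  rw [IsFixedPt, ContinuousMap.ext_iff, IsDuhamelSolution,
    and_iff_right u.continuous.Icc_extend'.continuousOn, Subtype.forall]
  refine forall₂_congr fun t ht => ?_
  rw [picardMap_apply, IccExtend_of_mem hT u ht, eq_comm]

theorem exists_unique_isDuhamelSolution [CompleteSpace X] (hT : 0 ≤ T)
    (hg : ContinuousOn g (Icc 0 T)) (hF : IntegrableOn F (Icc 0 T)) (hG : LipschitzWith K G) :
    ∃ U, IsDuhamelSolution T g F G U ∧
      ∀ V, IsDuhamelSolution T g F G V → EqOn U V (Icc 0 T) := by
  obtain ⟨u, hu, hunique⟩ := (volterraLipschitzWith_picardMap hT hg hF hG).existsUnique_isFixedPt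
  refine ⟨IccExtend hT u, (isFixedPt_picardMap_iff hT hg hF _ u).1 hu, fun V hV => ?_⟩
  let v : C(Icc 0 T, X) := ⟨(Icc 0 T).domRestrict V, hV.1.domRestrict⟩
  have hvV : EqOn (IccExtend hT v) V (Icc 0 T) := fun t ht => IccExtend_of_mem hT v ht
  rwa [← hunique v ((isFixedPt_picardMap_iff hT hg hF _ v).2 (hV.congr hvV.symm))]

end Picard

theorem norm_e3 : ‖e3‖ = 1 := by
  simp [e3]

theorem norm_Npt_apply_sub_le (p : Fin 11 → EuclideanSpace ℝ (Fin 3)) (u v : E) (i : Fin 11) :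
    ‖Npt p u i - Npt p v i‖ ≤ ‖u i - v i‖ :=
  calc ‖Npt p u i - Npt p v i‖
        = |max (-(⟪p i, e3⟫ + ⟪v i, e3⟫)) 0 - max (-(⟪p i, e3⟫ + ⟪u i, e3⟫)) 0| := by
          simp only [Npt, PiLp.toLp_apply, ← sub_smul, norm_smul, norm_e3, mul_one,
            Real.norm_eq_abs, neg_sub_neg]
    _ ≤ |⟪u i - v i, e3⟫| :=
          (abs_max_sub_max_le_abs _ _ 0).trans_eq (by rw [inner_sub_left]; ring_nf)
    _ ≤ ‖u i - v i‖ := by simpa [norm_e3] using abs_real_inner_le_norm (u i - v i) e3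

theorem lipschitzWith_one_Npt (p : Fin 11 → EuclideanSpace ℝ (Fin 3)) :
    LipschitzWith 1 (Npt p) := by
  refine LipschitzWith.of_dist_le_mul fun u v => ?_
  rw [NNReal.coe_one, one_mul, dist_eq_norm, dist_eq_norm,
    ← sq_le_sq₀ (norm_nonneg _) (norm_nonneg _), PiLp.norm_sq_eq_of_L2, PiLp.norm_sq_eq_of_L2]
  gcongr with i
  exact norm_Npt_apply_sub_le p u v i

theorem penalized_problem_existence_uniqueness_general (T : ℝ) (hT : 0 < T)
    (κ : ℝ)
    (Υ : E →ₗ[ℝ] E)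
    (p : Fin 11 → EuclideanSpace ℝ (Fin 3))
    (F : ℝ → E) (hF : IntegrableOn F (Set.Icc 0 T))
    (U₀ U₁ : E) :
    ∃ U : ℝ → E, ContinuousOn U (Set.Icc 0 T) ∧
      (∀ t ∈ Set.Icc (0 : ℝ) T,
        U t = U₀ + t • U₁ +
          ∫ s in (0 : ℝ)..t, (t - s) • (F s - Υ (U s) - κ⁻¹ • Npt p (U s))) ∧
      ∀ V : ℝ → E, ContinuousOn V (Set.Icc 0 T) →
        (∀ t ∈ Set.Icc (0 : ℝ) T,
          V t = U₀ + t • U₁ +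
            ∫ s in (0 : ℝ)..t, (t - s) • (F s - Υ (V s) - κ⁻¹ • Npt p (V s))) →
        Set.EqOn U V (Set.Icc 0 T) := by
  have hG : LipschitzWith _ fun u => Υ u + κ⁻¹ • Npt p u :=
    Υ.lipschitzWith_of_finiteDimensional.add
      ((lipschitzWith_smul κ⁻¹).comp (lipschitzWith_one_Npt p))
  have hg : ContinuousOn (fun t : ℝ => U₀ + t • U₁) (Icc 0 T) := by fun_prop
  have hduhamel (W : ℝ → E) (t : ℝ) :
      ∫ s in (0 : ℝ)..t, (t - s) • (F s - Υ (W s) - κ⁻¹ • Npt p (W s)) =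
        duhamel (fun s => F s - (Υ (W s) + κ⁻¹ • Npt p (W s))) t := by
    simp only [duhamel, sub_sub]
  obtain ⟨U, hU, hunique⟩ := exists_unique_isDuhamelSolution hT.le hg hF hG
  simp only [IsDuhamelSolution, ← hduhamel] at hU hunique
  exact ⟨U, hU.1, hU.2, fun V hV hVeq => hunique V ⟨hV, hVeq⟩⟩

/-- existence and uniqueness of a continuous solution on `[0,T]`
of the Duhamel integral formulation of the penalized problem
`U'' + Υ U + κ⁻¹ N_pt(U) = F`, `U(0) = U₀`, `U'(0) = U₁`:
`U(t) = U₀ + t • U₁ + ∫₀ᵗ (t − s) • (F(s) − Υ(U(s)) − κ⁻¹ N_pt(U(s))) ds`. -/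
theorem penalized_problem_existence_uniqueness (T : ℝ) (hT : 0 < T)
    (κ : ℝ) (hκ : 0 < κ)
    (Υ : E →ₗ[ℝ] E)
    (p : Fin 11 → EuclideanSpace ℝ (Fin 3)) (hp : ∀ i, 0 ≤ ⟪p i, e3⟫)
    (F : ℝ → E) (hF : IntegrableOn F (Set.Icc 0 T))
    (U₀ U₁ : E) :
    ∃ U : ℝ → E, ContinuousOn U (Set.Icc 0 T) ∧
      (∀ t ∈ Set.Icc (0 : ℝ) T,
        U t = U₀ + t • U₁ +
          ∫ s in (0 : ℝ)..t, (t - s) • (F s - Υ (U s) - κ⁻¹ • Npt p (U s))) ∧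
      ∀ V : ℝ → E, ContinuousOn V (Set.Icc 0 T) →
        (∀ t ∈ Set.Icc (0 : ℝ) T,
          V t = U₀ + t • U₁ +
            ∫ s in (0 : ℝ)..t, (t - s) • (F s - Υ (V s) - κ⁻¹ • Npt p (V s))) →
        Set.EqOn U V (Set.Icc 0 T) :=
  penalized_problem_existence_uniqueness_general T hT κ Υ p F hF U₀ U₁
end

section
/- Let E denote the inner product space of functions Fin 11 → ℝ³, let T > 0, let Υ : E → E be a symmetric positive semidefinite linear map, let p : Fin 11 → ℝ³ have heights a i := ⟨p i, e₃⟩ ≥ 0, let F : [0,T] → E be square integrable, let U₁ ∈ E, and let U₀ ∈ E satisfy a i + ⟨U₀ i, e₃⟩ ≥ 0 for all i. Then there exists a constant c₀ > 0, depending only on T, Υ, F, U₀, U₁ and p but not on κ, such that for every κ > 0 and every continuous solution U of the integral equation U(t) = U₀ + t • U₁ + ∫₀ᵗ (t − s) • (F(s) − Υ(U(s)) − κ⁻¹ N_pt(U(s))) ds on [0,T], one has ‖U(t)‖ ≤ c₀ and ‖U₁ + ∫₀ᵗ (F(s) − Υ(U(s)) − κ⁻¹ N_pt(U(s))) ds‖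 ≤ c₀ for all t ∈ [0,T]. -/
open MeasureTheory intervalIntegral
open scoped RealInnerProductSpace BigOperators

/- ### auxiliary lemmas -/

instance instContinuousSMulRealE : ContinuousSMul ℝ E := inferInstance

lemma continuous_Npt (p : Fin 11 → EuclideanSpace ℝ (Fin 3)) : Continuous (Npt p) := by
  unfold Npt
  refine (PiLp.continuous_toLp _ _).comp ?_
  apply continuous_pi
  intro i
  apply Continuous.fun_smul _ continuous_const
  apply Continuous.fun_neg
  apply Continuous.max _ continuous_const
  apply Continuous.neg
  exact continuous_const.add ((PiLp.continuous_apply _ _ i).inner continuous_const)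

noncomputable def coordL (i : Fin 11) : E →ₗ[ℝ] ℝ where
  toFun u := ⟪u i, e3⟫
  map_add' u v := by simp [inner_add_left]
  map_smul' c u := by simp [real_inner_smul_left, Finset.mul_sum, mul_assoc]

noncomputable def coordCLM (i : Fin 11) : E →L[ℝ] ℝ := (coordL i).toContinuousLinearMap

lemma coordCLM_apply (i : Fin 11) (u : E) : coordCLM i u = ⟪u i, e3⟫ := rfl

lemma inner_Npt (p : Fin 11 → EuclideanSpace ℝ (Fin 3)) (u v : E) :
    ⟪Npt p u, v⟫ = ∑ i, (-(max (-(⟪p i, e3⟫ + ⟪u i, e3⟫)) 0)) * ⟪v i, e3⟫ := by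
  rw [PiLp.inner_apply]
  refine Finset.sum_congr rfl fun i _ => ?_
  show ⟪(-(max (-(⟪p i, e3⟫ + ⟪u i, e3⟫)) 0)) • e3, v i⟫ = _
  rw [real_inner_smul_left, real_inner_comm e3 (v i)]

lemma hasDerivAt_mul_abs (x : ℝ) : HasDerivAt (fun y : ℝ => y * |y|) (2 * |x|) x := by
  rcases lt_trichotomy x 0 with hx | hx | hx
  · have h := ((hasDerivAt_id x).mul (hasDerivAt_id x)).neg
    have he : (fun y : ℝ => y * |y|) =ᶠ[nhds x] fun y => -(y * y) := by
      filter_upwards [eventually_lt_nhds hx] with y hy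
      rw [abs_of_neg hy]; ring
    have := h.congr_of_eventuallyEq he
    simpa [abs_of_neg hx, two_mul] using this.congr_deriv (by simp)
  · subst hx
    rw [hasDerivAt_iff_isLittleO]
    simp only [abs_zero, mul_zero, zero_mul, sub_zero, smul_zero]
    rw [Asymptotics.isLittleO_iff]
    intro c hc
    filter_upwards [Metric.ball_mem_nhds (0:ℝ) hc] with y hy
    simp only [Real.norm_eq_abs, abs_mul, abs_abs]
    have : |y| < c := by simpa [Real.dist_eq] using hy
    nlinarith [abs_nonneg y]
  · have h := (hasDerivAt_id x).mul (hasDerivAt_id x)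
    have he : (fun y : ℝ => y * |y|) =ᶠ[nhds x] fun y => y * y := by
      filter_upwards [eventually_gt_nhds hx] with y hy
      rw [abs_of_pos hy]
    have := h.congr_of_eventuallyEq he
    simpa [abs_of_pos hx, two_mul] using this.congr_deriv (by simp)

lemma hasDerivAt_negpart_sq (x : ℝ) :
    HasDerivAt (fun y : ℝ => max (-y) 0 ^ 2 / 2) (-(max (-x) 0)) x := by
  have key : ∀ y : ℝ, max (-y) 0 ^ 2 / 2 = (y * y - y * |y|) / 4 := by
    intro y
    rcases le_or_gt 0 y with hy | hy
    · rw [max_eq_right (by linarith), abs_of_nonneg hy]; ring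
    · rw [max_eq_left (by linarith), abs_of_neg hy]; ring
  have h := (((hasDerivAt_id x).mul (hasDerivAt_id x)).sub (hasDerivAt_mul_abs x)).div_const 4
  have := h.congr_of_eventuallyEq (Filter.Eventually.of_forall fun y => (key y))
  refine this.congr_deriv ?_
  simp only [id]
  rcases le_or_gt 0 x with hx | hx
  · rw [max_eq_right (by linarith), abs_of_nonneg hx]; ring
  · rw [max_eq_left (by linarith), abs_of_neg hx]; ring

section fubini

variable {X : Type*} [NormedAddCommGroup X] [NormedSpace ℝ X] [CompleteSpace X]

lemma duhamel_swap (g : ℝ → X) (t : ℝ) (ht : 0 ≤ t) (hg : IntegrableOn g (Set.Ioc 0 t)) :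
    ∫ s in Set.Ioc (0:ℝ) t, (t - s) • g s = ∫ r in Set.Ioc (0:ℝ) t, ∫ s in Set.Ioc (0:ℝ) r, g s := by
  set μ := volume.restrict (Set.Ioc (0:ℝ) t) with hμ
  have hfin : IsFiniteMeasure μ := by
    constructor
    rw [hμ, Measure.restrict_apply_univ]
    exact (Real.volume_Ioc ▸ ENNReal.ofReal_lt_top)
  have hgint : Integrable g μ := hg
  have h1 : ∀ r ∈ Set.Ioc (0:ℝ) t,
      (∫ s in Set.Ioc (0:ℝ) r, g s) = ∫ s, (Set.Ioc (0:ℝ) r).indicator g s ∂μ := by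
    intro r hr
    rw [MeasureTheory.integral_indicator measurableSet_Ioc, hμ,
      Measure.restrict_restrict measurableSet_Ioc,
      Set.inter_eq_left.mpr (Set.Ioc_subset_Ioc_right hr.2)]
  have hD : MeasurableSet {z : ℝ × ℝ | 0 < z.2 ∧ z.2 ≤ z.1} := by
    exact (measurableSet_lt measurable_const measurable_snd).inter
      (measurableSet_le measurable_snd measurable_fst)
  have hker : ∀ r s : ℝ, (Set.Ioc (0:ℝ) r).indicator g s
      = Set.indicator {z : ℝ × ℝ | 0 < z.2 ∧ z.2 ≤ z.1} (fun z => g z.2) (r, s) := by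
    intro r s
    by_cases h : s ∈ Set.Ioc (0:ℝ) r
    · rw [Set.indicator_of_mem h, Set.indicator_of_mem (by exact h)]
    · rw [Set.indicator_of_notMem h, Set.indicator_of_notMem (by exact h)]
  have hintf : Integrable (Function.uncurry fun r s => (Set.Ioc (0:ℝ) r).indicator g s)
      (μ.prod μ) := by
    have hasm : AEStronglyMeasurable
        (Set.indicator {z : ℝ × ℝ | 0 < z.2 ∧ z.2 ≤ z.1} (fun z => g z.2)) (μ.prod μ) :=
      (hgint.aestronglyMeasurable.comp_snd).indicator hD
    have heq : (Function.uncurry fun r s => (Set.Ioc (0:ℝ) r).indicator g s)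
        = Set.indicator {z : ℝ × ℝ | 0 < z.2 ∧ z.2 ≤ z.1} (fun z => g z.2) := by
      funext z; exact hker z.1 z.2
    rw [heq]
    have hbig : Integrable (fun z : ℝ × ℝ => ‖g z.2‖) (μ.prod μ) := by
      have := Integrable.mul_prod (μ := μ) (ν := μ) (integrable_const (1:ℝ)) hgint.norm
      simpa using this
    apply hbig.mono' hasm
    filter_upwards with z
    by_cases h : z ∈ {z : ℝ × ℝ | 0 < z.2 ∧ z.2 ≤ z.1}
    · rw [Set.indicator_of_mem h]
    · rw [Set.indicator_of_notMem h]; simp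
  symm
  calc ∫ r in Set.Ioc (0:ℝ) t, ∫ s in Set.Ioc (0:ℝ) r, g s
      = ∫ r, (∫ s, (Set.Ioc (0:ℝ) r).indicator g s ∂μ) ∂μ := by
        rw [hμ]; exact setIntegral_congr_fun measurableSet_Ioc h1
    _ = ∫ s, (∫ r, (Set.Ioc (0:ℝ) r).indicator g s ∂μ) ∂μ := integral_integral_swap hintf
    _ = ∫ s in Set.Ioc (0:ℝ) t, (t - s) • g s := by
        rw [hμ]
        apply setIntegral_congr_fun measurableSet_Ioc
        intro s hs
        have h2 : ∀ r : ℝ, (Set.Ioc (0:ℝ) r).indicator g s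
            = (Set.Ici s).indicator (fun _ => g s) r := by
          intro r
          by_cases h : s ≤ r
          · rw [Set.indicator_of_mem (Set.mem_Ioc.mpr ⟨hs.1, h⟩),
              Set.indicator_of_mem (Set.mem_Ici.mpr h)]
          · rw [Set.indicator_of_notMem (fun hmem => h (Set.mem_Ioc.mp hmem).2),
              Set.indicator_of_notMem (fun hmem => h (Set.mem_Ici.mp hmem))]
        simp_rw [h2]
        rw [integral_indicator_const _ measurableSet_Ici,
          measureReal_restrict_apply measurableSet_Ici]
        have : Set.Ici s ∩ Set.Ioc 0 t = Set.Icc s t := by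
          ext y
          simp only [Set.mem_inter_iff, Set.mem_Ici, Set.mem_Ioc, Set.mem_Icc]
          constructor
          · rintro ⟨h1', h2', h3'⟩; exact ⟨h1', h3'⟩
          · rintro ⟨h1', h2'⟩; exact ⟨h1', lt_of_lt_of_le hs.1 h1', h2'⟩
        rw [this, Real.volume_real_Icc_of_le (by linarith [hs.2])]

end fubini

section fubini2

variable {X : Type*} [NormedAddCommGroup X] [InnerProductSpace ℝ X] [CompleteSpace X]

lemma energy_sym (g : ℝ → X) (t : ℝ) (hg : IntegrableOn g (Set.Ioc 0 t)) :
    ∫ s in Set.Ioc (0:ℝ) t, ⟪g s, ∫ r in Set.Ioc (0:ℝ) s, g r⟫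
      = ‖∫ s in Set.Ioc (0:ℝ) t, g s‖^2 / 2 := by
  set μ := volume.restrict (Set.Ioc (0:ℝ) t) with hμ
  have hfin : IsFiniteMeasure μ := by
    constructor
    rw [hμ, Measure.restrict_apply_univ]
    exact (Real.volume_Ioc ▸ ENNReal.ofReal_lt_top)
  have hgint : Integrable g μ := hg
  set K : ℝ × ℝ → ℝ := fun z => ⟪g z.1, g z.2⟫ with hK
  set D : Set (ℝ × ℝ) := {z | z.2 ≤ z.1} with hDdef
  set D' : Set (ℝ × ℝ) := {z | z.1 ≤ z.2} with hD'def
  have hD : MeasurableSet D := measurableSet_le measurable_snd measurable_fst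
  have hD' : MeasurableSet D' := measurableSet_le measurable_fst measurable_snd
  have hKm : AEStronglyMeasurable K (μ.prod μ) :=
    AEStronglyMeasurable.inner hgint.aestronglyMeasurable.comp_fst hgint.aestronglyMeasurable.comp_snd
  have hKint : Integrable K (μ.prod μ) := by
    have hbig := Integrable.mul_prod (μ := μ) (ν := μ) hgint.norm hgint.norm
    apply hbig.mono' hKm
    filter_upwards with z
    exact norm_inner_le_norm _ _
  have hdiagnull : (μ.prod μ) {z : ℝ × ℝ | z.1 = z.2} = 0 := by
    have hmeas : MeasurableSet {z : ℝ × ℝ | z.1 = z.2} :=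
      measurableSet_eq_fun measurable_fst measurable_snd
    rw [Measure.prod_apply hmeas]
    have : ∀ s : ℝ, μ (Prod.mk s ⁻¹' {z : ℝ × ℝ | z.1 = z.2}) = 0 := by
      intro s
      have : Prod.mk s ⁻¹' {z : ℝ × ℝ | z.1 = z.2} = {s} := by
        ext r; simp [eq_comm]
      rw [this]
      exact le_antisymm ((Measure.restrict_le_self _).trans_eq (Real.volume_singleton)) zero_le
    simp [this]
  have hswap : ∫ z, D.indicator K z ∂(μ.prod μ) = ∫ z, D'.indicator K z ∂(μ.prod μ) := by
    rw [← MeasureTheory.integral_prod_swap]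
    congr 1
    funext z
    by_cases h : z ∈ D'
    · rw [Set.indicator_of_mem h, Set.indicator_of_mem (by exact h)]
      exact real_inner_comm _ _
    · rw [Set.indicator_of_notMem h, Set.indicator_of_notMem (by exact h)]
  have hsum : (∫ z, D.indicator K z ∂(μ.prod μ)) + (∫ z, D'.indicator K z ∂(μ.prod μ))
      = (∫ z, K z ∂(μ.prod μ)) + ∫ z, ({z : ℝ × ℝ | z.1 = z.2}).indicator K z ∂(μ.prod μ) := by
    rw [← integral_add (hKint.indicator hD) (hKint.indicator hD'),
      ← integral_add hKint (hKint.indicator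
        (measurableSet_eq_fun measurable_fst measurable_snd))]
    congr 1
    funext z
    by_cases h1 : z.2 ≤ z.1 <;> by_cases h2 : z.1 ≤ z.2
    · have he : z.1 = z.2 := le_antisymm h2 h1
      rw [Set.indicator_of_mem (show z ∈ D from h1), Set.indicator_of_mem (show z ∈ D' from h2),
        Set.indicator_of_mem (show z ∈ {z : ℝ × ℝ | z.1 = z.2} from he)]
    · rw [Set.indicator_of_mem (show z ∈ D from h1),
        Set.indicator_of_notMem (show z ∉ D' from h2),
        Set.indicator_of_notMem (show z ∉ {z : ℝ × ℝ | z.1 = z.2} from fun he => h2 (le_of_eq he))]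
    · rw [Set.indicator_of_notMem (show z ∉ D from h1),
        Set.indicator_of_mem (show z ∈ D' from h2),
        Set.indicator_of_notMem
          (show z ∉ {z : ℝ × ℝ | z.1 = z.2} from fun he => h1 (le_of_eq he.symm))]
      ring_nf
    · exact absurd (le_of_not_ge h1) h2
  have hdiagzero : ∫ z, ({z : ℝ × ℝ | z.1 = z.2}).indicator K z ∂(μ.prod μ) = 0 := by
    rw [MeasureTheory.integral_indicator (measurableSet_eq_fun measurable_fst measurable_snd),
      Measure.restrict_eq_zero.mpr hdiagnull, integral_zero_measure]
  have htot : ∫ z, K z ∂(μ.prod μ) = ‖∫ s, g s ∂μ‖^2 := by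
    have hKint' : Integrable (Function.uncurry fun s r => K (s, r)) (μ.prod μ) := hKint
    have h2 : (∫ s, ∫ r, K (s, r) ∂μ ∂μ) = ∫ z, K z ∂(μ.prod μ) :=
      MeasureTheory.integral_integral (f := fun s r => K (s, r)) hKint'
    rw [← h2]
    have h3 : ∀ s : ℝ, (∫ r, K (s, r) ∂μ) = ⟪g s, ∫ r, g r ∂μ⟫ := by
      intro s
      simp only [hK]
      exact integral_inner hgint (g s)
    calc ∫ s, ∫ r, K (s, r) ∂μ ∂μ = ∫ s, ⟪g s, ∫ r, g r ∂μ⟫ ∂μ := by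
          exact integral_congr_ae (Filter.Eventually.of_forall h3)
      _ = ∫ s, ⟪∫ r, g r ∂μ, g s⟫ ∂μ := by
          exact integral_congr_ae (Filter.Eventually.of_forall fun s => real_inner_comm _ _)
      _ = ⟪∫ r, g r ∂μ, ∫ s, g s ∂μ⟫ := integral_inner hgint _
      _ = ‖∫ s, g s ∂μ‖^2 := by rw [real_inner_self_eq_norm_sq]
  have hhalf : ∫ z, D.indicator K z ∂(μ.prod μ) = ‖∫ s, g s ∂μ‖^2 / 2 := by
    have := hsum
    rw [← hswap, hdiagzero, htot, add_zero] at this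
    linarith
  have h1 : ∀ s ∈ Set.Ioc (0:ℝ) t,
      ⟪g s, ∫ r in Set.Ioc (0:ℝ) s, g r⟫ = ∫ r, D.indicator K (s, r) ∂μ := by
    intro s hs
    have hres : (∫ r in Set.Ioc (0:ℝ) s, g r) = ∫ r, (Set.Ioc (0:ℝ) s).indicator g r ∂μ := by
      rw [MeasureTheory.integral_indicator measurableSet_Ioc, hμ,
        Measure.restrict_restrict measurableSet_Ioc,
        Set.inter_eq_left.mpr (Set.Ioc_subset_Ioc_right hs.2)]
    rw [hres, ← integral_inner (hgint.indicator (measurableSet_Ioc (a := (0:ℝ)) (b := s))) (g s),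
      hμ]
    apply setIntegral_congr_fun measurableSet_Ioc
    intro r hr
    show inner ℝ (g s) ((Set.Ioc 0 s).indicator g r) = D.indicator K (s, r)
    by_cases h : r ≤ s
    · rw [Set.indicator_of_mem (Set.mem_Ioc.mpr ⟨hr.1, h⟩),
        Set.indicator_of_mem (show (s, r) ∈ D from h)]
    · rw [Set.indicator_of_notMem (fun hm => h (Set.mem_Ioc.mp hm).2),
        Set.indicator_of_notMem (show (s, r) ∉ D from h)]
      simp
  calc ∫ s in Set.Ioc (0:ℝ) t, ⟪g s, ∫ r in Set.Ioc (0:ℝ) s, g r⟫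
      = ∫ s, ∫ r, D.indicator K (s, r) ∂μ ∂μ := by
        rw [hμ]; exact setIntegral_congr_fun measurableSet_Ioc h1
    _ = ∫ z, D.indicator K z ∂(μ.prod μ) :=
        MeasureTheory.integral_integral (f := fun s r => D.indicator K (s, r))
          (by exact hKint.indicator hD)
    _ = ‖∫ s, g s ∂μ‖^2 / 2 := hhalf

end fubini2

set_option maxHeartbeats 1000000

/-- uniform-in-κ a priori bounds on displacement and velocity of
solutions of the penalized problem (in Duhamel integral form): there is a
constant `c₀ > 0` independent of `κ` bounding `‖U(t)‖` and `‖U'(t)‖` on `[0,T]`. -/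
theorem penalized_problem_uniform_bounds (T : ℝ) (hT : 0 < T)
    (Υ : E →ₗ[ℝ] E) (hsym : ∀ x y : E, ⟪Υ x, y⟫ = ⟪x, Υ y⟫)
    (hpos : ∀ x : E, 0 ≤ ⟪Υ x, x⟫)
    (p : Fin 11 → EuclideanSpace ℝ (Fin 3)) (hp : ∀ i, 0 ≤ ⟪p i, e3⟫)
    (F : ℝ → E) (hF : MemLp F 2 (volume.restrict (Set.Icc 0 T)))
    (U₁ : E) (U₀ : E) (hU₀ : ∀ i, 0 ≤ ⟪p i, e3⟫ + ⟪U₀ i, e3⟫) :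
    ∃ c₀ : ℝ, 0 < c₀ ∧
      ∀ κ : ℝ, 0 < κ →
        ∀ U : ℝ → E, ContinuousOn U (Set.Icc 0 T) →
          (∀ t ∈ Set.Icc (0 : ℝ) T,
            U t = U₀ + t • U₁ +
              ∫ s in (0 : ℝ)..t, (t - s) • (F s - Υ (U s) - κ⁻¹ • Npt p (U s))) →
          ∀ t ∈ Set.Icc (0 : ℝ) T,
            ‖U t‖ ≤ c₀ ∧
            ‖U₁ + ∫ s in (0 : ℝ)..t, (F s - Υ (U s) - κ⁻¹ • Npt p (U s))‖ ≤ c₀ := by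
  -- integrability of F
  have hfinIcc : IsFiniteMeasure (volume.restrict (Set.Icc (0:ℝ) T)) := by
    constructor
    rw [Measure.restrict_apply_univ]
    exact (Real.volume_Icc ▸ ENNReal.ofReal_lt_top)
  have hFI : IntegrableOn F (Set.Icc 0 T) volume := hF.integrable (by norm_num)
  set IF := ∫ s in Set.Icc (0:ℝ) T, ‖F s‖ with hIFdef
  have hIFnn : 0 ≤ IF := setIntegral_nonneg measurableSet_Icc fun _ _ => norm_nonneg _
  set a := ‖U₁‖^2 + ⟪Υ U₀, U₀⟫ with hadef
  have hann : 0 ≤ a := add_nonneg (sq_nonneg _) (hpos U₀)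
  set Smax := 2 * IF + Real.sqrt a with hSmaxdef
  have hSmaxnn : 0 ≤ Smax := by positivity
  refine ⟨‖U₀‖ + T * Smax + Smax + 1, by positivity, ?_⟩
  intro κ hκ U hUc hU
  -- the force field of the equation
  set G : ℝ → E := fun s => F s - Υ (U s) - κ⁻¹ • Npt p (U s) with hGdef
  have hΥc : Continuous (fun u : E => Υ u) := LinearMap.continuous_of_finiteDimensional Υ
  have hGint : IntegrableOn G (Set.Icc 0 T) volume := by
    apply Integrable.sub (Integrable.sub hFI ?_) ?_
    · exact (hΥc.comp_continuousOn hUc).integrableOn_Icc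
    · exact (((continuous_Npt p).comp_continuousOn hUc).const_smul κ⁻¹).integrableOn_Icc
  have hIocIcc : ∀ t : ℝ, t ∈ Set.Icc (0:ℝ) T → Set.Ioc (0:ℝ) t ⊆ Set.Icc (0:ℝ) T :=
    fun t ht x hx => ⟨hx.1.le, hx.2.trans ht.2⟩
  have hGIoc : ∀ t ∈ Set.Icc (0:ℝ) T, IntegrableOn G (Set.Ioc 0 t) volume :=
    fun t ht => hGint.mono_set (hIocIcc t ht)
  have hGii : ∀ t ∈ Set.Icc (0:ℝ) T, IntervalIntegrable G volume 0 t := fun t ht => by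
    rw [intervalIntegrable_iff_integrableOn_Ioc_of_le ht.1]
    exact hGIoc t ht
  -- velocity
  set V : ℝ → E := fun r => U₁ + ∫ s in (0:ℝ)..r, G s with hVdef
  have hPc : ContinuousOn (fun r => ∫ s in (0:ℝ)..r, G s) (Set.Icc 0 T) := by
    have := intervalIntegral.continuousOn_primitive_interval
      (a := (0:ℝ)) (b := T) (μ := volume) (f := G)
      (by rw [Set.uIcc_of_le hT.le]; exact hGint)
    rwa [Set.uIcc_of_le hT.le] at this
  have hVc : ContinuousOn V (Set.Icc 0 T) := continuousOn_const.add hPc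
  have hVii : ∀ t ∈ Set.Icc (0:ℝ) T, IntervalIntegrable V volume 0 t := fun t ht =>
    (hVc.mono (by rw [Set.uIcc_of_le ht.1]; exact Set.Icc_subset_Icc_right ht.2)).intervalIntegrable
  -- U is the primitive of V
  have hU0 : U 0 = U₀ := by
    have := hU 0 ⟨le_rfl, hT.le⟩
    simpa using this
  have hUeq : ∀ t ∈ Set.Icc (0:ℝ) T, U t = U₀ + ∫ r in (0:ℝ)..t, V r := by
    intro t ht
    have h1 := hU t ht
    rw [integral_of_le ht.1] at h1
    rw [h1]
    show U₀ + t • U₁ + ∫ s in Set.Ioc (0:ℝ) t, (t - s) • G s = _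
    have hconv : ∫ r in Set.Ioc (0:ℝ) t, (∫ s in Set.Ioc (0:ℝ) r, G s)
        = ∫ r in Set.Ioc (0:ℝ) t, ∫ s in (0:ℝ)..r, G s :=
      setIntegral_congr_fun measurableSet_Ioc fun r hr => by rw [integral_of_le hr.1.le]
    have hPint : IntegrableOn (fun r => ∫ s in (0:ℝ)..r, G s) (Set.Ioc 0 t) volume :=
      ((hPc.mono (Set.Icc_subset_Icc_right ht.2)).integrableOn_Icc).mono_set
        Set.Ioc_subset_Icc_self
    have hVsplit : ∫ r in Set.Ioc (0:ℝ) t, V r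
        = (∫ _r in Set.Ioc (0:ℝ) t, U₁) + ∫ r in Set.Ioc (0:ℝ) t, ∫ s in (0:ℝ)..r, G s :=
      integral_add (integrableOn_const (by
        rw [Real.volume_Ioc]; exact ENNReal.ofReal_ne_top)) hPint
    rw [duhamel_swap G t ht.1 (hGIoc t ht), hconv, integral_of_le ht.1, hVsplit,
      setIntegral_const, Real.volume_real_Ioc_of_le ht.1, sub_zero, add_assoc]
  -- derivative of U within Ioi
  have hUderiv : ∀ x ∈ Set.Ioo (0:ℝ) T, HasDerivWithinAt U (V x) (Set.Ioi x) x := by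
    intro x hx
    have hxIcc : x ∈ Set.Icc (0:ℝ) T := ⟨hx.1.le, hx.2.le⟩
    have hmem : Set.Icc (0:ℝ) T ∈ nhds x := Icc_mem_nhds hx.1 hx.2
    have hVat : ContinuousAt V x := hVc.continuousAt hmem
    have hVsm : StronglyMeasurableAtFilter V (nhds x) :=
      ⟨Set.Icc 0 T, hmem, hVc.aestronglyMeasurable measurableSet_Icc⟩
    have hW : HasDerivAt (fun r => U₀ + ∫ s in (0:ℝ)..r, V s) (V x) x :=
      (intervalIntegral.integral_hasDerivAt_right (hVii x hxIcc) hVsm hVat).const_add U₀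
    have hev : U =ᶠ[nhdsWithin x (Set.Ioi x)] fun r => U₀ + ∫ s in (0:ℝ)..r, V s := by
      filter_upwards [Ioc_mem_nhdsGT_of_mem (Set.mem_Ico.mpr ⟨le_rfl, hx.2⟩)] with r hr
      exact hUeq r ⟨hx.1.le.trans hr.1.le, hr.2⟩
    exact (hW.hasDerivWithinAt).congr_of_eventuallyEq hev (hUeq x hxIcc)
  -- maximum of the velocity on the interval
  obtain ⟨x₀, hx₀, hmax'⟩ := isCompact_Icc.exists_isMaxOn (Set.nonempty_Icc.mpr hT.le)
    (continuous_norm.comp_continuousOn hVc)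
  have hmax : ∀ y ∈ Set.Icc (0:ℝ) T, ‖V y‖ ≤ ‖V x₀‖ := fun y hy => hmax' hy
  have hUcx : ContinuousOn U (Set.Icc 0 x₀) := hUc.mono (Set.Icc_subset_Icc_right hx₀.2)
  have hVcx : ContinuousOn V (Set.Icc 0 x₀) := hVc.mono (Set.Icc_subset_Icc_right hx₀.2)
  -- the elastic-energy identity
  have hΥeq : ∫ s in (0:ℝ)..x₀, ⟪Υ (U s), V s⟫
      = ⟪Υ (U x₀), U x₀⟫ / 2 - ⟪Υ U₀, U₀⟫ / 2 := by
    have hder : ∀ x ∈ Set.Ioo (0:ℝ) x₀, HasDerivWithinAt (fun s => ⟪Υ (U s), U s⟫ / 2)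
        (⟪Υ (U x), V x⟫) (Set.Ioi x) x := by
      intro x hx
      have hd := hUderiv x ⟨hx.1, lt_of_lt_of_le hx.2 hx₀.2⟩
      have hΥd : HasDerivWithinAt (fun s => Υ (U s)) (Υ (V x)) (Set.Ioi x) x := by
        have := (LinearMap.toContinuousLinearMap Υ).hasFDerivAt.comp_hasDerivWithinAt x hd
        exact this
      have hi := HasDerivWithinAt.inner (𝕜 := ℝ) hΥd hd
      have h2 := hi.div_const 2
      have heq : (⟪Υ (U x), V x⟫ + ⟪Υ (V x), U x⟫) / 2 = ⟪Υ (U x), V x⟫ := by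
        rw [hsym (V x) (U x), real_inner_comm (V x) (Υ (U x))]
        ring
      rwa [heq] at h2
    have hcont : ContinuousOn (fun s => ⟪Υ (U s), U s⟫ / 2) (Set.Icc 0 x₀) :=
      ((hΥc.comp_continuousOn hUcx).inner hUcx).div_const 2
    have hint : IntervalIntegrable (fun s => ⟪Υ (U s), V s⟫) volume 0 x₀ := by
      apply ContinuousOn.intervalIntegrable
      rw [Set.uIcc_of_le hx₀.1]
      exact (hΥc.comp_continuousOn hUcx).inner hVcx
    have hFTC := intervalIntegral.integral_eq_sub_of_hasDeriv_right_of_le hx₀.1 hcont hder hint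
    rw [hFTC, hU0]
  -- the penalty-energy identity
  have hNeq : ∫ s in (0:ℝ)..x₀, ⟪Npt p (U s), V s⟫
      = ∑ i, max (-(⟪p i, e3⟫ + ⟪U x₀ i, e3⟫)) 0 ^ 2 / 2 := by
    have hder : ∀ x ∈ Set.Ioo (0:ℝ) x₀,
        HasDerivWithinAt (fun s => ∑ i : Fin 11, max (-(⟪p i, e3⟫ + ⟪U s i, e3⟫)) 0 ^ 2 / 2)
          (⟪Npt p (U x), V x⟫) (Set.Ioi x) x := by
      intro x hx
      have hd := hUderiv x ⟨hx.1, lt_of_lt_of_le hx.2 hx₀.2⟩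
      rw [inner_Npt]
      apply HasDerivWithinAt.fun_sum
      intro i _
      have hLi : HasDerivWithinAt (fun s => ⟪U s i, e3⟫) (⟪V x i, e3⟫) (Set.Ioi x) x := by
        have := (coordCLM i).hasFDerivAt.comp_hasDerivWithinAt x hd
        exact this
      have hci : HasDerivWithinAt (fun s => ⟪p i, e3⟫ + ⟪U s i, e3⟫) (⟪V x i, e3⟫)
          (Set.Ioi x) x := hLi.const_add (⟪p i, e3⟫)
      have := (hasDerivAt_negpart_sq (⟪p i, e3⟫ + ⟪U x i, e3⟫)).comp_hasDerivWithinAt x hci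
      exact this
    have hcont : ContinuousOn
        (fun s => ∑ i : Fin 11, max (-(⟪p i, e3⟫ + ⟪U s i, e3⟫)) 0 ^ 2 / 2)
        (Set.Icc 0 x₀) := by
      have hΦc : Continuous (fun u : E => ∑ i : Fin 11, max (-(⟪p i, e3⟫ + ⟪u i, e3⟫)) 0 ^ 2 / 2) := by
        apply continuous_finset_sum
        intro i _
        exact (((continuous_const.add ((coordCLM i).continuous)).neg.max
          continuous_const).pow 2).div_const 2
      exact hΦc.comp_continuousOn hUcx
    have hint : IntervalIntegrable (fun s => ⟪Npt p (U s), V s⟫) volume 0 x₀ := by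
      apply ContinuousOn.intervalIntegrable
      rw [Set.uIcc_of_le hx₀.1]
      exact ((continuous_Npt p).comp_continuousOn hUcx).inner hVcx
    have hFTC := intervalIntegral.integral_eq_sub_of_hasDeriv_right_of_le hx₀.1 hcont hder hint
    rw [hFTC]
    have hf0 : ∑ i : Fin 11, max (-(⟪p i, e3⟫ + ⟪U 0 i, e3⟫)) 0 ^ 2 / 2 = 0 := by
      rw [hU0]
      apply Finset.sum_eq_zero
      intro i _
      rw [max_eq_right (neg_nonpos.mpr (hU₀ i))]
      norm_num
    rw [hf0, sub_zero]
  -- the kinetic-energy identity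
  have hGx₀ : IntegrableOn G (Set.Ioc 0 x₀) volume := hGIoc x₀ hx₀
  have hEn : ∫ s in Set.Ioc (0:ℝ) x₀, ⟪G s, V s⟫ = ‖V x₀‖^2/2 - ‖U₁‖^2/2 := by
    obtain ⟨CA, hCA⟩ : ∃ C, ∀ s ∈ Set.Icc (0:ℝ) T, ‖∫ r in (0:ℝ)..s, G r‖ ≤ C := by
      obtain ⟨y, hy, hyb⟩ := isCompact_Icc.exists_isMaxOn (Set.nonempty_Icc.mpr hT.le)
        (continuous_norm.comp_continuousOn hPc)
      exact ⟨_, fun s hs => hyb hs⟩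
    have hint1 : IntegrableOn (fun s => ⟪G s, U₁⟫) (Set.Ioc 0 x₀) volume := by
      apply Integrable.mono' (hGx₀.norm.mul_const ‖U₁‖)
        (hGx₀.aestronglyMeasurable.inner aestronglyMeasurable_const)
      filter_upwards with s
      exact norm_inner_le_norm _ _
    have hint2 : IntegrableOn (fun s => ⟪G s, ∫ r in (0:ℝ)..s, G r⟫) (Set.Ioc 0 x₀) volume := by
      apply Integrable.mono' (hGx₀.norm.mul_const CA)
        (hGx₀.aestronglyMeasurable.inner
          ((hPc.mono (hIocIcc x₀ hx₀)).aestronglyMeasurable measurableSet_Ioc))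
      rw [ae_restrict_iff' measurableSet_Ioc]
      filter_upwards with s hs
      exact le_trans (norm_inner_le_norm _ _)
        (mul_le_mul_of_nonneg_left (hCA s (hIocIcc x₀ hx₀ hs)) (norm_nonneg _))
    have hsplit : ∫ s in Set.Ioc (0:ℝ) x₀, ⟪G s, V s⟫
        = (∫ s in Set.Ioc (0:ℝ) x₀, ⟪G s, U₁⟫)
          + ∫ s in Set.Ioc (0:ℝ) x₀, ⟪G s, ∫ r in (0:ℝ)..s, G r⟫ := by
      rw [← integral_add hint1 hint2]
      apply setIntegral_congr_fun measurableSet_Ioc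
      intro s _
      exact inner_add_right _ _ _
    have hv1 : ∫ s in Set.Ioc (0:ℝ) x₀, ⟪G s, U₁⟫ = ⟪U₁, ∫ s in Set.Ioc (0:ℝ) x₀, G s⟫ := by
      rw [← integral_inner hGx₀ U₁]
      exact setIntegral_congr_fun measurableSet_Ioc fun s _ => real_inner_comm _ _
    have hv2 : ∫ s in Set.Ioc (0:ℝ) x₀, ⟪G s, ∫ r in (0:ℝ)..s, G r⟫
        = ‖∫ s in Set.Ioc (0:ℝ) x₀, G s‖^2 / 2 := by
      rw [setIntegral_congr_fun measurableSet_Ioc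
        (fun s hs => by rw [integral_of_le hs.1.le] :
          ∀ s ∈ Set.Ioc (0:ℝ) x₀, ⟪G s, ∫ r in (0:ℝ)..s, G r⟫
            = ⟪G s, ∫ r in Set.Ioc (0:ℝ) s, G r⟫)]
      exact energy_sym G x₀ hGx₀
    have hnorm : ‖V x₀‖^2
        = ‖U₁‖^2 + 2*⟪U₁, ∫ s in Set.Ioc (0:ℝ) x₀, G s⟫ + ‖∫ s in Set.Ioc (0:ℝ) x₀, G s‖^2 := by
      show ‖U₁ + ∫ s in (0:ℝ)..x₀, G s‖^2 = _
      rw [integral_of_le hx₀.1]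
      exact norm_add_sq_real U₁ _
    rw [hsplit, hv1, hv2]
    linarith [hnorm]
  -- splitting the energy identity
  have hFIoc : IntegrableOn F (Set.Ioc 0 x₀) volume := hFI.mono_set (hIocIcc x₀ hx₀)
  have hFVint : IntegrableOn (fun s => ⟪F s, V s⟫) (Set.Ioc 0 x₀) volume := by
    apply Integrable.mono' (hFIoc.norm.mul_const ‖V x₀‖)
      (hFIoc.aestronglyMeasurable.inner
        ((hVc.mono (hIocIcc x₀ hx₀)).aestronglyMeasurable measurableSet_Ioc))
    rw [ae_restrict_iff' measurableSet_Ioc]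
    filter_upwards with s hs
    exact le_trans (norm_inner_le_norm _ _)
      (mul_le_mul_of_nonneg_left (hmax s (hIocIcc x₀ hx₀ hs)) (norm_nonneg _))
  have hΥVint : IntegrableOn (fun s => ⟪Υ (U s), V s⟫) (Set.Ioc 0 x₀) volume :=
    (((hΥc.comp_continuousOn hUcx).inner hVcx).integrableOn_Icc).mono_set
      Set.Ioc_subset_Icc_self
  have hNVint : IntegrableOn (fun s => ⟪Npt p (U s), V s⟫) (Set.Ioc 0 x₀) volume :=
    ((((continuous_Npt p).comp_continuousOn hUcx).inner hVcx).integrableOn_Icc).mono_set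
      Set.Ioc_subset_Icc_self
  have hsplit2 : ∫ s in Set.Ioc (0:ℝ) x₀, ⟪G s, V s⟫
      = (∫ s in Set.Ioc (0:ℝ) x₀, ⟪F s, V s⟫) - (∫ s in (0:ℝ)..x₀, ⟪Υ (U s), V s⟫)
        - κ⁻¹ * ∫ s in (0:ℝ)..x₀, ⟪Npt p (U s), V s⟫ := by
    have hpt : ∀ s : ℝ, ⟪G s, V s⟫
        = ⟪F s, V s⟫ - ⟪Υ (U s), V s⟫ - κ⁻¹ * ⟪Npt p (U s), V s⟫ := by
      intro s
      show ⟪F s - Υ (U s) - κ⁻¹ • Npt p (U s), V s⟫ = _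
      rw [inner_sub_left, inner_sub_left, real_inner_smul_left]
    simp only [integral_of_le hx₀.1]
    calc ∫ s in Set.Ioc (0:ℝ) x₀, ⟪G s, V s⟫
        = ∫ s in Set.Ioc (0:ℝ) x₀,
            (⟪F s, V s⟫ - ⟪Υ (U s), V s⟫ - κ⁻¹ * ⟪Npt p (U s), V s⟫) :=
          setIntegral_congr_fun measurableSet_Ioc fun s _ => hpt s
      _ = _ := by
          have hsub : IntegrableOn (fun s => ⟪F s, V s⟫ - ⟪Υ (U s), V s⟫)
              (Set.Ioc 0 x₀) volume := hFVint.sub hΥVint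
          have hcm : IntegrableOn (fun s => κ⁻¹ * ⟪Npt p (U s), V s⟫)
              (Set.Ioc 0 x₀) volume := hNVint.const_mul κ⁻¹
          rw [integral_sub hsub hcm, integral_sub hFVint hΥVint, MeasureTheory.integral_const_mul κ⁻¹ _]
  -- the L¹ bound on the forcing term
  have hFbound : ∫ s in Set.Ioc (0:ℝ) x₀, ⟪F s, V s⟫ ≤ IF * ‖V x₀‖ := by
    calc ∫ s in Set.Ioc (0:ℝ) x₀, ⟪F s, V s⟫
        ≤ ∫ s in Set.Ioc (0:ℝ) x₀, ‖F s‖ * ‖V x₀‖ := by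
          apply setIntegral_mono_on hFVint (hFIoc.norm.mul_const _) measurableSet_Ioc
          intro s hs
          exact le_trans (real_inner_le_norm _ _)
            (mul_le_mul_of_nonneg_left (hmax s (hIocIcc x₀ hx₀ hs)) (norm_nonneg _))
      _ = (∫ s in Set.Ioc (0:ℝ) x₀, ‖F s‖) * ‖V x₀‖ := integral_mul_const _ _
      _ ≤ IF * ‖V x₀‖ := by
          apply mul_le_mul_of_nonneg_right _ (norm_nonneg _)
          exact setIntegral_mono_set hFI.norm
            (ae_of_all _ fun s => norm_nonneg (F s))
            ((hIocIcc x₀ hx₀).eventuallyLE)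
  -- the quadratic inequality for the maximum of the velocity
  have hΦnn : 0 ≤ ∑ i, max (-(⟪p i, e3⟫ + ⟪U x₀ i, e3⟫)) 0 ^ 2 / 2 :=
    Finset.sum_nonneg fun i _ => by positivity
  have hκΦ : 0 ≤ κ⁻¹ * ∑ i, max (-(⟪p i, e3⟫ + ⟪U x₀ i, e3⟫)) 0 ^ 2 / 2 :=
    mul_nonneg (inv_nonneg.mpr hκ.le) hΦnn
  have hS2 : ‖V x₀‖^2 ≤ a + 2 * (IF * ‖V x₀‖) := by
    have hkey := hEn
    rw [hsplit2, hΥeq, hNeq] at hkey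
    have := hpos (U x₀)
    rw [hadef]
    linarith [hFbound]
  have hSle : ‖V x₀‖ ≤ Smax := by
    rw [hSmaxdef]
    by_contra hcon
    push_neg at hcon
    nlinarith [Real.sq_sqrt hann, Real.sqrt_nonneg a, hIFnn, norm_nonneg (V x₀), hS2]
  -- conclusion
  intro t ht
  constructor
  · rw [hUeq t ht]
    calc ‖U₀ + ∫ r in (0:ℝ)..t, V r‖
        ≤ ‖U₀‖ + ‖∫ r in (0:ℝ)..t, V r‖ := norm_add_le _ _
      _ ≤ ‖U₀‖ + ∫ r in (0:ℝ)..t, ‖V r‖ :=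
          add_le_add_right (intervalIntegral.norm_integral_le_integral_norm ht.1) _
      _ ≤ ‖U₀‖ + ∫ _r in (0:ℝ)..t, Smax := by
          apply add_le_add_right
          apply intervalIntegral.integral_mono_on ht.1 ((hVii t ht).norm)
            intervalIntegrable_const
          intro s hs
          exact le_trans (hmax s ⟨hs.1, hs.2.trans ht.2⟩) hSle
      _ = ‖U₀‖ + t * Smax := by rw [intervalIntegral.integral_const, smul_eq_mul, sub_zero]
      _ ≤ ‖U₀‖ + T * Smax :=
          add_le_add_right (mul_le_mul_of_nonneg_right ht.2 hSmaxnn) _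
      _ ≤ ‖U₀‖ + T * Smax + Smax + 1 := by linarith
  · show ‖V t‖ ≤ _
    have h1 : ‖V t‖ ≤ Smax := le_trans (hmax t ht) hSle
    have h2 : 0 ≤ T * Smax := mul_nonneg hT.le hSmaxnn
    linarith [norm_nonneg U₀]
end
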